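/- Let H be a complex Hilbert space, let A be a bounded, positive (hence self-adjoint), invertible operator on H, and let x ∈ H satisfy ‖A x‖ = ‖x‖ and ‖A⁻¹ x‖ = ‖x‖. Then A x = x. -/

import Mathlib

open ContinuousLinearMap

/-! Self-adjointness gives `⟪A x, A⁻¹ x⟫ = ⟪x, x⟫`, so `‖A x - A⁻¹ x‖² = ‖A x‖² + ‖A⁻¹ x‖² - 2‖x‖² = 0`
and hence `A² x = x`. Writing `y = A x - x`, this says `A y + y = 0`; pairing with `y` gives
`re ⟪y, A y⟫ + ‖y‖² = 0`, which forces `y = 0` because `A` is positive. -/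

section

variable {𝕜 E : Type*} [RCLike 𝕜] [NormedAddCommGroup E] [InnerProductSpace 𝕜 E]

open RCLike

theorem eq_of_norm_sq_eq_re_inner {u v : E} (hu : re (inner 𝕜 u v) = ‖u‖ ^ 2)
    (hv : re (inner 𝕜 u v) = ‖v‖ ^ 2) : u = v := by
  rw [← sub_eq_zero, ← norm_eq_zero, ← pow_eq_zero_iff two_ne_zero, norm_sub_sq (𝕜 := 𝕜)]
  linarith

namespace ContinuousLinearMap.IsPositive

variable {T : E →L[𝕜] E}

theorem eq_zero_of_apply_add_self_eq_zero (hT : T.IsPositive) {y : E} (h : T y + y = 0) :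
    y = 0 := by
  have hsum : re (inner 𝕜 (T y) y) + ‖y‖ ^ 2 = 0 := by
    rw [← inner_self_eq_norm_sq (𝕜 := 𝕜), ← map_add, ← inner_add_left, h, inner_zero_left,
      map_zero]
  have hpos := hT.re_inner_nonneg_left y
  rw [← norm_eq_zero, ← pow_eq_zero_iff two_ne_zero]
  linarith [sq_nonneg ‖y‖]

theorem apply_eq_of_apply_apply_eq (hT : T.IsPositive) {x : E} (h : T (T x) = x) : T x = x := by
  rw [← sub_eq_zero]
  exact hT.eq_zero_of_apply_add_self_eq_zero (by rw [map_sub, h]; abel)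

end ContinuousLinearMap.IsPositive

end

theorem stmt_11_general {H : Type*} [NormedAddCommGroup H] [InnerProductSpace ℂ H]
    (A B : H →L[ℂ] H)
    (hA_pos : A.IsPositive)
    (hAB : A.comp B = ContinuousLinearMap.id ℂ H)
    (x : H)
    (hx1 : ‖A x‖ = ‖x‖)
    (hx2 : ‖B x‖ = ‖x‖) :
    A x = x := by
  have hABx : A (B x) = x := by simpa using DFunLike.congr_fun hAB x
  have hinner : RCLike.re (inner ℂ (A x) (B x)) = ‖x‖ ^ 2 := by
    rw [hA_pos.inner_left_eq_inner_right, hABx, inner_self_eq_norm_sq]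
  have hAx_eq_Bx : A x = B x :=
    eq_of_norm_sq_eq_re_inner (𝕜 := ℂ) (by rw [hinner, hx1]) (by rw [hinner, hx2])
  exact hA_pos.apply_eq_of_apply_apply_eq (by rw [hAx_eq_Bx, hABx])

/-- Let `A` be a bounded, positive, invertible operator on a complex Hilbert
space `H` (with bounded two-sided inverse `B`), and let `x ∈ H` satisfy
`‖A x‖ = ‖x‖` and `‖A⁻¹ x‖ = ‖x‖`. Then `A x = x`. -/
theorem stmt_11 {H : Type*} [NormedAddCommGroup H] [InnerProductSpace ℂ H]
    [CompleteSpace H]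
    (A B : H →L[ℂ] H)
    (hA_pos : A.IsPositive)
    (hAB : A.comp B = ContinuousLinearMap.id ℂ H)
    (hBA : B.comp A = ContinuousLinearMap.id ℂ H)
    (x : H)
    (hx1 : ‖A x‖ = ‖x‖)
    (hx2 : ‖B x‖ = ‖x‖) :
    A x = x :=
  stmt_11_general A B hA_pos hAB x hx1 hx2
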